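/- arXiv:2306.17345 — 2 statements merged into one kernel-verified Lean document; each statement's English description precedes it below -/
import Mathlib

section
/- Let (B_0, B_1, r, s) be a quantum quiver where B_0 and B_1 carry δ-forms ψ_0, ψ_1 (for the same δ > 0). Let m_1 : B_1 ⊗ B_1 → B_1 be multiplication, m_1* its Hilbert-space adjoint with respect to ψ_1, and r* : B_1 → B_0 the adjoint of r. Then m_1 ∘ (s r* ⊗ s r*) ∘ m_1* = δ² · (s r*); that is, (B_1, ψ_1, s r*) is a quantum graph. -/
/-! The pairings `innTᵢ` are forced to be the inner product of `Bᵢ ⊗ Bᵢ`, so `mᵢ*` is the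
Hilbert-space adjoint of `mᵢ`. Taking adjoints in `r m₀ = m₁ (r ⊗ r)` shows that `r*` is
comultiplicative, `m₀* r* = (r* ⊗ r*) m₁*`; with `s m₀ = m₁ (s ⊗ s)` this gives
`m₁ (s r* ⊗ s r*) m₁* = s m₀ m₀* r* = δ² s r*`. -/

open TensorProduct LinearMap

section

variable {𝕜 E F : Type*} [RCLike 𝕜]
  [NormedAddCommGroup E] [InnerProductSpace 𝕜 E] [NormedAddCommGroup F] [InnerProductSpace 𝕜 F]

theorem TensorProduct.eq_inner_of_tmul_of_add (p : E ⊗[𝕜] F → E ⊗[𝕜] F → 𝕜)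
    (hp : ∀ a b c d, p (a ⊗ₜ b) (c ⊗ₜ d) = inner 𝕜 a c * inner 𝕜 b d)
    (hadd_left : ∀ x x' y, p (x + x') y = p x y + p x' y)
    (hadd_right : ∀ x y y', p x (y + y') = p x y + p x y') (x y : E ⊗[𝕜] F) :
    p x y = inner 𝕜 x y := by
  induction x using TensorProduct.induction_on generalizing y with
  | zero => simpa using (AddMonoidHom.mk' (p · y) (hadd_left · · y)).map_zero
  | add x x' hx hx' => rw [hadd_left, hx, hx', inner_add_left]
  | tmul a b =>
    induction y using TensorProduct.induction_on with
    | zero => simpa using (AddMonoidHom.mk' (p (a ⊗ₜ b)) (hadd_right (a ⊗ₜ b))).map_zero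
    | add y y' hy hy' => rw [hadd_right, hy, hy', inner_add_right]
    | tmul c d => rw [hp, inner_tmul]

end

section

variable {𝕜 E F : Type*} [RCLike 𝕜]
  [NormedAddCommGroup E] [InnerProductSpace 𝕜 E] [FiniteDimensional 𝕜 E]
  [NormedAddCommGroup F] [InnerProductSpace 𝕜 F] [FiniteDimensional 𝕜 F]

theorem LinearMap.eq_adjoint_of_inner_apply {A : E →ₗ[𝕜] F} {B : F →ₗ[𝕜] E}
    (h : ∀ x y, inner 𝕜 (A x) y = inner 𝕜 x (B y)) : B = adjoint A := by
  rw [(eq_adjoint_iff A B).2 h, adjoint_adjoint]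

theorem LinearMap.adjoint_comp_adjoint_eq_map_adjoint_comp_adjoint
    {mE : E ⊗[𝕜] E →ₗ[𝕜] E} {mF : F ⊗[𝕜] F →ₗ[𝕜] F} {f : E →ₗ[𝕜] F}
    (hf : f ∘ₗ mE = mF ∘ₗ map f f) :
    adjoint mE ∘ₗ adjoint f = map (adjoint f) (adjoint f) ∘ₗ adjoint mF := by
  rw [← adjoint_comp, hf, adjoint_comp, adjoint_map]

def IsQuantumGraph (m : F ⊗[𝕜] F →ₗ[𝕜] F) (c : 𝕜) (A : F →ₗ[𝕜] F) : Prop :=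
  m ∘ₗ map A A ∘ₗ adjoint m = c • A

theorem isQuantumGraph_comp_adjoint {mE : E ⊗[𝕜] E →ₗ[𝕜] E} {mF : F ⊗[𝕜] F →ₗ[𝕜] F} {c : 𝕜}
    (hmE : mE ∘ₗ adjoint mE = c • LinearMap.id) {r s : E →ₗ[𝕜] F}
    (hr : r ∘ₗ mE = mF ∘ₗ map r r) (hs : s ∘ₗ mE = mF ∘ₗ map s s) :
    IsQuantumGraph mF c (s ∘ₗ adjoint r) := by
  calc mF ∘ₗ map (s ∘ₗ adjoint r) (s ∘ₗ adjoint r) ∘ₗ adjoint mF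
      = (mF ∘ₗ map s s) ∘ₗ map (adjoint r) (adjoint r) ∘ₗ adjoint mF := by
        rw [map_comp]; rfl
    _ = (s ∘ₗ mE) ∘ₗ adjoint mE ∘ₗ adjoint r := by
        rw [hs, adjoint_comp_adjoint_eq_map_adjoint_comp_adjoint hr]
    _ = s ∘ₗ (mE ∘ₗ adjoint mE) ∘ₗ adjoint r := rfl
    _ = c • (s ∘ₗ adjoint r) := by
        rw [hmE, smul_comp, id_comp, comp_smul]

end

theorem stmt7_general {B0 B1 : Type*}
    [NormedAddCommGroup B0] [InnerProductSpace ℂ B0] [FiniteDimensional ℂ B0]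
    [NormedAddCommGroup B1] [InnerProductSpace ℂ B1] [FiniteDimensional ℂ B1]
    (δ : ℝ)
    (m0 : TensorProduct ℂ B0 B0 →ₗ[ℂ] B0) (m1 : TensorProduct ℂ B1 B1 →ₗ[ℂ] B1)
    (m0s : B0 →ₗ[ℂ] TensorProduct ℂ B0 B0) (m1s : B1 →ₗ[ℂ] TensorProduct ℂ B1 B1)
    -- the induced inner products on the tensor squares
    (innT0 : TensorProduct ℂ B0 B0 → TensorProduct ℂ B0 B0 → ℂ)
    (innT1 : TensorProduct ℂ B1 B1 → TensorProduct ℂ B1 B1 → ℂ)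
    (hinnT0 : ∀ a b c d : B0, innT0 (a ⊗ₜ[ℂ] b) (c ⊗ₜ[ℂ] d) =
      (inner ℂ a c : ℂ) * (inner ℂ b d : ℂ))
    (hinnT1 : ∀ a b c d : B1, innT1 (a ⊗ₜ[ℂ] b) (c ⊗ₜ[ℂ] d) =
      (inner ℂ a c : ℂ) * (inner ℂ b d : ℂ))
    (hadd0l : ∀ x x' y, innT0 (x + x') y = innT0 x y + innT0 x' y)
    (hadd0r : ∀ x y y', innT0 x (y + y') = innT0 x y + innT0 x y')
    (hadd1l : ∀ x x' y, innT1 (x + x') y = innT1 x y + innT1 x' y)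
    (hadd1r : ∀ x y y', innT1 x (y + y') = innT1 x y + innT1 x y')
    -- `m0s`, `m1s` are the adjoints (comultiplications) of the multiplications
    (hadj0 : ∀ (t : TensorProduct ℂ B0 B0) (z : B0), (inner ℂ (m0 t) z : ℂ) = innT0 t (m0s z))
    (hadj1 : ∀ (t : TensorProduct ℂ B1 B1) (z : B1), (inner ℂ (m1 t) z : ℂ) = innT1 t (m1s z))
    -- the δ-form conditions `mᵢ mᵢ* = δ² id`
    (hform0 : m0 ∘ₗ m0s = ((δ : ℂ) ^ 2) • LinearMap.id)
    -- the quiver maps, which are multiplicative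
    (r s : B0 →ₗ[ℂ] B1)
    (hr : ∀ x y : B0, r (m0 (x ⊗ₜ[ℂ] y)) = m1 (r x ⊗ₜ[ℂ] r y))
    (hs : ∀ x y : B0, s (m0 (x ⊗ₜ[ℂ] y)) = m1 (s x ⊗ₜ[ℂ] s y)) :
    m1 ∘ₗ TensorProduct.map (s ∘ₗ LinearMap.adjoint r) (s ∘ₗ LinearMap.adjoint r) ∘ₗ m1s
      = ((δ : ℂ) ^ 2) • (s ∘ₗ LinearMap.adjoint r) := by
  obtain rfl : m0s = adjoint m0 := eq_adjoint_of_inner_apply fun t z => by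
    rw [hadj0, TensorProduct.eq_inner_of_tmul_of_add innT0 hinnT0 hadd0l hadd0r]
  obtain rfl : m1s = adjoint m1 := eq_adjoint_of_inner_apply fun t z => by
    rw [hadj1, TensorProduct.eq_inner_of_tmul_of_add innT1 hinnT1 hadd1l hadd1r]
  exact isQuantumGraph_comp_adjoint hform0 (TensorProduct.ext' hr) (TensorProduct.ext' hs)

/-- Let `(B₀, B₁, r, s)` be a quantum quiver whose algebras carry δ-forms (for the
same `δ > 0`), so that `B₀, B₁` become Hilbert spaces `L²(Bᵢ)`; let `mᵢ` be the
multiplication maps, `mᵢ*` their Hilbert space adjoints (characterised against the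
induced inner product on the tensor square), and `r*` the adjoint of `r`.  Then
`m₁ ∘ (s r* ⊗ s r*) ∘ m₁* = δ² · (s r*)`, i.e. `(B₁, ψ₁, s r*)` is a quantum graph. -/
theorem stmt7 {B0 B1 : Type*}
    [NormedAddCommGroup B0] [InnerProductSpace ℂ B0] [FiniteDimensional ℂ B0]
    [NormedAddCommGroup B1] [InnerProductSpace ℂ B1] [FiniteDimensional ℂ B1]
    (δ : ℝ) (hδ : 0 < δ)
    (m0 : TensorProduct ℂ B0 B0 →ₗ[ℂ] B0) (m1 : TensorProduct ℂ B1 B1 →ₗ[ℂ] B1)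
    (m0s : B0 →ₗ[ℂ] TensorProduct ℂ B0 B0) (m1s : B1 →ₗ[ℂ] TensorProduct ℂ B1 B1)
    -- the induced inner products on the tensor squares
    (innT0 : TensorProduct ℂ B0 B0 → TensorProduct ℂ B0 B0 → ℂ)
    (innT1 : TensorProduct ℂ B1 B1 → TensorProduct ℂ B1 B1 → ℂ)
    (hinnT0 : ∀ a b c d : B0, innT0 (a ⊗ₜ[ℂ] b) (c ⊗ₜ[ℂ] d) =
      (inner ℂ a c : ℂ) * (inner ℂ b d : ℂ))
    (hinnT1 : ∀ a b c d : B1, innT1 (a ⊗ₜ[ℂ] b) (c ⊗ₜ[ℂ] d) =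
      (inner ℂ a c : ℂ) * (inner ℂ b d : ℂ))
    (hadd0l : ∀ x x' y, innT0 (x + x') y = innT0 x y + innT0 x' y)
    (hadd0r : ∀ x y y', innT0 x (y + y') = innT0 x y + innT0 x y')
    (hadd1l : ∀ x x' y, innT1 (x + x') y = innT1 x y + innT1 x' y)
    (hadd1r : ∀ x y y', innT1 x (y + y') = innT1 x y + innT1 x y')
    -- `m0s`, `m1s` are the adjoints (comultiplications) of the multiplications
    (hadj0 : ∀ (t : TensorProduct ℂ B0 B0) (z : B0), (inner ℂ (m0 t) z : ℂ) = innT0 t (m0s z))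
    (hadj1 : ∀ (t : TensorProduct ℂ B1 B1) (z : B1), (inner ℂ (m1 t) z : ℂ) = innT1 t (m1s z))
    -- the δ-form conditions `mᵢ mᵢ* = δ² id`
    (hform0 : m0 ∘ₗ m0s = ((δ : ℂ) ^ 2) • LinearMap.id)
    (hform1 : m1 ∘ₗ m1s = ((δ : ℂ) ^ 2) • LinearMap.id)
    -- the quiver maps, which are multiplicative
    (r s : B0 →ₗ[ℂ] B1)
    (hr : ∀ x y : B0, r (m0 (x ⊗ₜ[ℂ] y)) = m1 (r x ⊗ₜ[ℂ] r y))
    (hs : ∀ x y : B0, s (m0 (x ⊗ₜ[ℂ] y)) = m1 (s x ⊗ₜ[ℂ] s y)) :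
    m1 ∘ₗ TensorProduct.map (s ∘ₗ LinearMap.adjoint r) (s ∘ₗ LinearMap.adjoint r) ∘ₗ m1s
      = ((δ : ℂ) ^ 2) • (s ∘ₗ LinearMap.adjoint r) :=
  stmt7_general δ m0 m1 m0s m1s innT0 innT1 hinnT0 hinnT1 hadd0l hadd0r hadd1l hadd1r hadj0 hadj1
    hform0 r s hr hs
end

section
/- Let (B_0, B_1, r, s) be a complete quantum quiver with B_0 = ∏_{w ∈ I_0} M_{n_w}(ℂ). Then for each v ∈ I_0, the integer ∑_{w ∈ I_0} n_w is a multiple of n_v. -/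
/-!
Taking `x = 1` in the adjoint relation and using completeness gives
`∑ α, trace (s 1_v)_α = ∑ w, n w`. For each block `α` of `B₁`, `a ↦ s (Pi.single v a) α` is a
non-unital homomorphism out of `M_{n v}(ℂ)`; the images of the diagonal matrix units are
idempotents, so their traces are natural numbers, and they all have the same trace because
`e_ii = e_ij e_ji` while `e_jj = e_ji e_ij`. Since `1 = ∑ i, e_ii`, the trace of
`s (1_v)_α` is a multiple of `n v`.
-/

open Matrix

def NonUnitalRingHom.single {ι : Type*} (R : ι → Type*) [DecidableEq ι]
    [∀ i, NonUnitalNonAssocSemiring (R i)] (i : ι) : R i →ₙ+* ∀ i, R i :=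
  { MulHom.single (α := R) i, AddMonoidHom.single R i with }

namespace Matrix

variable {K ι κ : Type*} [Field K] [Fintype ι] [Fintype κ] [DecidableEq κ]

theorem exists_trace_eq_natCast_of_isIdempotentElem [DecidableEq ι] {q : Matrix ι ι K}
    (hq : IsIdempotentElem q) : ∃ k : ℕ, q.trace = k :=
  have hlin : IsIdempotentElem q.toLin' := hq.map toLinAlgEquiv'
  ⟨_, by rw [← trace_toLin'_eq, (LinearMap.IsIdempotentElem.isProj_range _ hlin).trace]⟩

theorem trace_map_single_one_eq (φ : Matrix κ κ K →ₙ+* Matrix ι ι K) (i j : κ) :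
    (φ (single i i 1)).trace = (φ (single j j 1)).trace := by
  have hi : single i i (1 : K) = single i j 1 * single j i 1 := by simp
  have hj : single j j (1 : K) = single j i 1 * single i j 1 := by simp
  rw [hi, hj, map_mul, map_mul, trace_mul_comm]

theorem exists_trace_map_one_eq_card_mul (φ : Matrix κ κ K →ₙ+* Matrix ι ι K) :
    ∃ k : ℕ, (φ 1).trace = Fintype.card κ * k := by
  classical
  cases isEmpty_or_nonempty κ with
  | inl _ => exact ⟨0, by simp [Subsingleton.elim (1 : Matrix κ κ K) 0]⟩
  | inr h =>
    obtain ⟨j⟩ := h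
    have hidem : IsIdempotentElem (single j j (1 : K)) := by simp [IsIdempotentElem]
    obtain ⟨k, hk⟩ := exists_trace_eq_natCast_of_isIdempotentElem (hidem.map φ)
    refine ⟨k, ?_⟩
    rw [← sum_single_one, map_sum, trace_sum]
    simp [trace_map_single_one_eq φ _ j, hk]

end Matrix

/-- Let `(B₀, B₁, r, s)` be a complete quantum quiver with `B₀ = ∏_w M_{n w}(ℂ)` and
`B₁ = ∏_α M_{m α}(ℂ)`: writing `r*` for the adjoint of `r` with respect to the trace
inner products, completeness means `r* (s 1_v) = 1` for the unit `1_v` of each matrix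
block of `B₀`.  Then `∑ w, n w` is a multiple of each `n v`. -/
theorem stmt9 {I0 I1 : Type*} [Fintype I0] [Fintype I1] [DecidableEq I0]
    (n : I0 → ℕ) (m : I1 → ℕ)
    (r s : (∀ v : I0, Matrix (Fin (n v)) (Fin (n v)) ℂ) →⋆ₐ[ℂ]
      (∀ α : I1, Matrix (Fin (m α)) (Fin (m α)) ℂ))
    (rstar : (∀ α : I1, Matrix (Fin (m α)) (Fin (m α)) ℂ) →ₗ[ℂ]
      (∀ v : I0, Matrix (Fin (n v)) (Fin (n v)) ℂ))
    -- `rstar` is the adjoint of `r` with respect to the trace inner products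
    (hadj : ∀ x y, ∑ α : I1, ((r x α)ᴴ * y α).trace =
      ∑ v : I0, ((x v)ᴴ * rstar y v).trace)
    -- completeness: `r* ∘ s` sends each block unit to the unit of `B₀`
    (hcomplete : ∀ v : I0, rstar (s (Pi.single v 1)) = 1) :
    ∀ v : I0, (n v : ℕ) ∣ ∑ w : I0, n w := by
  intro v
  have htrace : ∑ α, (s (Pi.single v 1) α).trace = ∑ w, (n w : ℂ) := by
    simpa [hcomplete v] using hadj 1 (s (Pi.single v 1))
  let block (α : I1) : Matrix (Fin (n v)) (Fin (n v)) ℂ →ₙ+* Matrix (Fin (m α)) (Fin (m α)) ℂ :=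
    (Pi.evalNonUnitalRingHom (fun α ↦ Matrix (Fin (m α)) (Fin (m α)) ℂ) α).comp <|
      (s : _ →ₙ+* _).comp (NonUnitalRingHom.single (fun w ↦ Matrix (Fin (n w)) (Fin (n w)) ℂ) v)
  choose k hk using fun α ↦ exists_trace_map_one_eq_card_mul (block α)
  simp only [Fintype.card_fin] at hk
  refine ⟨∑ α, k α, ?_⟩
  have hsum : ((∑ w, n w : ℕ) : ℂ) = n v * ∑ α, k α := by
    push_cast
    rw [← htrace, Finset.mul_sum]
    exact Finset.sum_congr rfl fun α _ ↦ hk α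
  exact_mod_cast hsum
end
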